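/- Let D ⊆ ℝⁿ be a nonempty (possibly infinite) set of nonzero vectors contained in a nontrivial linear subspace L ⊆ ℝⁿ. Then pspan(D) = L if and only if CM_L(D) > 0. In particular, pspan(D) = span(D) if and only if CM_D(D) > 0. -/

import Mathlib

open scoped RealInnerProductSpace

noncomputable section

/-- The positive span of a set `D`: all finite nonnegative linear combinations
of elements of `D`. -/
def pspan {E : Type*} [AddCommGroup E] [Module ℝ E] (D : Set E) : Set E :=
  {x | ∃ (k : ℕ) (d : Fin k → E) (c : Fin k → ℝ),
    (∀ i, d i ∈ D) ∧ (∀ i, 0 ≤ c i) ∧ x = ∑ i, c i • d i}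

/-- The cosine measure of `D` relative to a subspace `L`:
`min` over unit vectors `u ∈ L` of `sup_{d ∈ D} ⟪u, d⟫ / ‖d‖`. -/
noncomputable def cmRel {E : Type*} [NormedAddCommGroup E] [InnerProductSpace ℝ E]
    (L : Submodule ℝ E) (D : Set E) : ℝ :=
  sInf ((fun u => sSup ((fun d => ⟪u, d⟫ / ‖d‖) '' D)) '' {u : E | u ∈ L ∧ ‖u‖ = 1})

/-- The cosine vector set of `D` relative to a subspace `L`: the set of unit
vectors `u ∈ L` attaining the minimum defining `cmRel L D`. -/
noncomputable def cVRel {E : Type*} [NormedAddCommGroup E] [InnerProductSpace ℝ E]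
    (L : Submodule ℝ E) (D : Set E) : Set E :=
  {u : E | u ∈ L ∧ ‖u‖ = 1 ∧ sSup ((fun d => ⟪u, d⟫ / ‖d‖) '' D) = cmRel L D}


/-! If `pspan D = L`, the infimum defining `cmRel L D` is attained (the inner supremum is
1-Lipschitz and the unit sphere of `L` is compact) at some unit `u ∈ pspan D`; the half-space
`{x | ⟪u, x⟫ ≤ 0}` misses `u`, so it cannot contain `D`, i.e. `⟪u, d⟫ > 0` for some `d ∈ D`.
Conversely, a convex set that is dense in the finite-dimensional space `L` is all of `L`, so if
`pspan D ≠ L` some `x ∈ L` lies outside the closed cone `closure (pspan D)`. Farkas' lemma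
separates `x` from that cone, and projecting the separating vector onto `L` gives a unit `u ∈ L`
with `⟪u, d⟫ ≤ 0` for all `d ∈ D`, whence `cmRel L D ≤ 0`. -/

open Set

theorem pspan_eq_hull {E : Type*} [AddCommGroup E] [Module ℝ E] (D : Set E) :
    pspan D = PointedCone.hull ℝ D := by
  ext x
  rw [SetLike.mem_coe, Submodule.mem_span_set']
  constructor
  · rintro ⟨k, d, c, hd, hc, rfl⟩
    exact ⟨k, fun i => ⟨c i, hc i⟩, fun i => ⟨d i, hd i⟩, rfl⟩
  · rintro ⟨k, c, d, rfl⟩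
    exact ⟨k, fun i => d i, fun i => c i, fun i => (d i).2, fun i => (c i).2, rfl⟩

section Dense

variable {E : Type*} [NormedAddCommGroup E] [NormedSpace ℝ E]

theorem Convex.eq_univ_of_dense [FiniteDimensional ℝ E] {s : Set E} (hs : Convex ℝ s)
    (hd : Dense s) : s = univ := by
  have hspan : affineSpan ℝ s = ⊤ := eq_top_iff.2 fun x _ =>
    (affineSpan ℝ s).closed_of_finiteDimensional.closure_subset_iff.2
      (subset_affineSpan ℝ s) (hd x)
  have hint := hs.interior_closure_eq_interior_of_nonempty_interior
    (hs.interior_nonempty_iff_affineSpan_eq_top.2 hspan)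
  rw [hd.closure_eq, interior_univ] at hint
  exact eq_univ_of_univ_subset (hint ▸ interior_subset)

theorem Convex.eq_of_subset_of_subset_closure {L : Submodule ℝ E} [FiniteDimensional ℝ L]
    {s : Set E} (hs : Convex ℝ s) (hsL : s ⊆ L) (hLs : (L : Set E) ⊆ closure s) :
    s = L := by
  have hdense : Dense (Subtype.val ⁻¹' s : Set L) :=
    Subtype.dense_iff.2 <| hLs.trans <| closure_mono fun y hy => ⟨⟨y, hsL hy⟩, hy, rfl⟩
  have huniv := (hs.linear_preimage L.subtype).eq_univ_of_dense hdense
  refine hsL.antisymm fun x hx => ?_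
  have hx' : (⟨x, hx⟩ : L) ∈ L.subtype ⁻¹' s := huniv ▸ mem_univ _
  exact hx'

end Dense

section CosineSup

variable {E : Type*} [NormedAddCommGroup E] [InnerProductSpace ℝ E] {D : Set E} {u : E}

def cosineSup (D : Set E) (u : E) : ℝ :=
  sSup ((fun d => ⟪u, d⟫ / ‖d‖) '' D)

theorem cmRel_eq_sInf_cosineSup (L : Submodule ℝ E) (D : Set E) :
    cmRel L D = sInf (cosineSup D '' {u | u ∈ L ∧ ‖u‖ = 1}) :=
  rfl

theorem abs_inner_div_norm_le_norm (u d : E) : |⟪u, d⟫ / ‖d‖| ≤ ‖u‖ := by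
  rw [abs_div, abs_norm]
  exact div_le_of_le_mul₀ (norm_nonneg _) (norm_nonneg _) (abs_real_inner_le_norm u d)

theorem bddAbove_inner_div_norm (D : Set E) (u : E) :
    BddAbove ((fun d => ⟪u, d⟫ / ‖d‖) '' D) :=
  ⟨‖u‖, forall_mem_image.2 fun d _ => (le_abs_self _).trans (abs_inner_div_norm_le_norm u d)⟩

theorem le_cosineSup {d : E} (hd : d ∈ D) : ⟪u, d⟫ / ‖d‖ ≤ cosineSup D u :=
  le_csSup (bddAbove_inner_div_norm D u) (mem_image_of_mem _ hd)

theorem cosineSup_le {a : ℝ} (hne : D.Nonempty) (h : ∀ d ∈ D, ⟪u, d⟫ / ‖d‖ ≤ a) :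
    cosineSup D u ≤ a :=
  csSup_le (hne.image _) (forall_mem_image.2 h)

theorem neg_norm_le_cosineSup (hne : D.Nonempty) (u : E) : -‖u‖ ≤ cosineSup D u :=
  let ⟨_, hd⟩ := hne
  (neg_le_of_abs_le (abs_inner_div_norm_le_norm _ _)).trans (le_cosineSup hd)

theorem cosineSup_nonpos (h : ∀ d ∈ D, ⟪u, d⟫ ≤ 0) : cosineSup D u ≤ 0 :=
  Real.sSup_nonpos <| forall_mem_image.2 fun d hd =>
    div_nonpos_of_nonpos_of_nonneg (h d hd) (norm_nonneg d)

theorem lipschitzWith_one_cosineSup (hne : D.Nonempty) : LipschitzWith 1 (cosineSup D) :=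
  LipschitzWith.of_le_add fun u v => cosineSup_le hne fun d hd =>
    calc ⟪u, d⟫ / ‖d‖ = ⟪v, d⟫ / ‖d‖ + ⟪u - v, d⟫ / ‖d‖ := by rw [inner_sub_left]; ring
      _ ≤ cosineSup D v + dist u v := by
        rw [dist_eq_norm]
        exact add_le_add (le_cosineSup hd)
          ((le_abs_self _).trans (abs_inner_div_norm_le_norm _ _))

variable {L : Submodule ℝ E}

theorem cmRel_le_cosineSup (hne : D.Nonempty) (huL : u ∈ L) (hu : ‖u‖ = 1) :
    cmRel L D ≤ cosineSup D u := by
  rw [cmRel_eq_sInf_cosineSup]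
  exact csInf_le ⟨-1, forall_mem_image.2 fun v hv => hv.2 ▸ neg_norm_le_cosineSup hne v⟩
    (mem_image_of_mem _ ⟨huL, hu⟩)

theorem cVRel_nonempty [FiniteDimensional ℝ E] (hne : D.Nonempty) (hL : L ≠ ⊥) :
    (cVRel L D).Nonempty := by
  obtain ⟨x, hxL, hx0⟩ := (Submodule.ne_bot_iff L).1 hL
  have hS : {u | u ∈ L ∧ ‖u‖ = 1}.Nonempty :=
    ⟨‖x‖⁻¹ • x, L.smul_mem _ hxL, norm_smul_inv_norm hx0⟩
  have hScompact : IsCompact {u | u ∈ L ∧ ‖u‖ = 1} := by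
    convert (isCompact_sphere (0 : E) 1).inter_left L.closed_of_finiteDimensional using 1
    ext
    simp
  obtain ⟨u, hu, hmin⟩ := hScompact.exists_isMinOn hS
    (lipschitzWith_one_cosineSup hne).continuous.continuousOn
  refine ⟨u, hu.1, hu.2, le_antisymm ?_ (cmRel_le_cosineSup hne hu.1 hu.2)⟩
  rw [cmRel_eq_sInf_cosineSup]
  exact le_csInf (hS.image _) (forall_mem_image.2 hmin)

end CosineSup

section Cone

variable {E : Type*} [NormedAddCommGroup E] [InnerProductSpace ℝ E] {D : Set E}

theorem exists_inner_pos_of_mem_hull {u : E} (hu : u ∈ PointedCone.hull ℝ D) (hu0 : u ≠ 0) :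
    ∃ d ∈ D, 0 < ⟪u, d⟫ := by
  by_contra! h
  have hdual : ∀ x ∈ PointedCone.hull ℝ D, ⟪u, x⟫ ≤ 0 := fun x hx => by
    induction hx using Submodule.span_induction with
    | mem d hd => exact h d hd
    | zero => simp
    | add x y _ _ hx hy => rw [inner_add_right]; linarith
    | smul c x _ hx =>
      change ⟪u, (c : ℝ) • x⟫ ≤ 0
      rw [real_inner_smul_right]
      exact mul_nonpos_of_nonneg_of_nonpos c.2 hx
  exact hu0 (real_inner_self_nonpos.1 (hdual u hu))

theorem exists_unit_inner_nonpos_of_notMem_closure_hull [FiniteDimensional ℝ E]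
    {L : Submodule ℝ E} (hDL : D ⊆ L) {x : E} (hxL : x ∈ L)
    (hx : x ∉ closure (PointedCone.hull ℝ D : Set E)) :
    ∃ u ∈ L, ‖u‖ = 1 ∧ ∀ d ∈ D, ⟪u, d⟫ ≤ 0 := by
  obtain ⟨y, hy, hxy⟩ :=
    ProperCone.hyperplane_separation' (Submodule.closure (PointedCone.hull ℝ D)) hx
  set v := L.starProjection y
  have hv : ∀ w ∈ L, ⟪w, v⟫ = ⟪w, y⟫ := fun w hw => by
    rw [← Submodule.inner_starProjection_left_eq_right, Submodule.starProjection_eq_self_iff.2 hw]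
  have hv0 : v ≠ 0 := fun h => by simpa [h] using (hv x hxL).trans_lt hxy
  refine ⟨-(‖v‖⁻¹ • v), L.neg_mem (L.smul_mem _ (L.starProjection_apply_mem y)),
    by rw [norm_neg]; exact norm_smul_inv_norm hv0, fun d hd => ?_⟩
  have hdv : 0 ≤ ⟪d, v⟫ :=
    (hv d (hDL hd)).symm ▸ hy d (subset_closure (PointedCone.subset_hull hd))
  rw [inner_neg_left, real_inner_smul_left, real_inner_comm, neg_nonpos]
  exact mul_nonneg (inv_nonneg.2 (norm_nonneg v)) hdv

theorem pspan_eq_iff_cmRel_pos [FiniteDimensional ℝ E] {L : Submodule ℝ E} (hne : D.Nonempty)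
    (hL : L ≠ ⊥) (hDL : D ⊆ L) : pspan D = L ↔ 0 < cmRel L D := by
  rw [pspan_eq_hull]
  constructor
  · intro h
    obtain ⟨u, huL, hu, hmin⟩ := cVRel_nonempty hne hL
    have huD : u ∈ (PointedCone.hull ℝ D : Set E) := h ▸ huL
    obtain ⟨d, hd, hud⟩ := exists_inner_pos_of_mem_hull huD (norm_ne_zero_iff.1 (hu ▸ one_ne_zero))
    have hd0 : d ≠ 0 := by rintro rfl; simp at hud
    calc 0 < ⟪u, d⟫ / ‖d‖ := div_pos hud (norm_pos_iff.2 hd0)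
      _ ≤ cosineSup D u := le_cosineSup hd
      _ = cmRel L D := hmin
  · intro hpos
    by_contra hneq
    have hsub : (PointedCone.hull ℝ D : Set E) ⊆ L := fun x hx =>
      Submodule.span_le.2 hDL (PointedCone.hull_le_span ℝ D hx)
    obtain ⟨x, hxL, hx⟩ : ∃ x ∈ L, x ∉ closure (PointedCone.hull ℝ D : Set E) := by
      by_contra! h
      exact hneq ((PointedCone.convex _).eq_of_subset_of_subset_closure hsub h)
    obtain ⟨u, huL, hu, hud⟩ := exists_unit_inner_nonpos_of_notMem_closure_hull hDL hxL hx
    exact hpos.not_ge ((cmRel_le_cosineSup hne huL hu).trans (cosineSup_nonpos hud))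

end Cone

theorem stmt10 {n : ℕ} (D : Set (EuclideanSpace ℝ (Fin n))) (hne : D.Nonempty)
    (h0 : (0 : EuclideanSpace ℝ (Fin n)) ∉ D)
    (L : Submodule ℝ (EuclideanSpace ℝ (Fin n))) (hL : L ≠ ⊥)
    (hDL : D ⊆ (L : Set (EuclideanSpace ℝ (Fin n)))) :
    (pspan D = (L : Set (EuclideanSpace ℝ (Fin n))) ↔ 0 < cmRel L D) ∧
    (pspan D = (Submodule.span ℝ D : Set (EuclideanSpace ℝ (Fin n))) ↔
      0 < cmRel (Submodule.span ℝ D) D) := by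
  refine ⟨pspan_eq_iff_cmRel_pos hne hL hDL, pspan_eq_iff_cmRel_pos hne ?_ Submodule.subset_span⟩
  obtain ⟨d, hd⟩ := hne
  exact (Submodule.ne_bot_iff _).2 ⟨d, Submodule.subset_span hd, fun h => h0 (h ▸ hd)⟩
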